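/- arXiv:1611.04175 — 8 statements merged into one kernel-verified Lean document; each statement's English description precedes it below -/
import Mathlib

section
/- If a profile P of pairwise distinct linear orders over a set of m candidates is single crossing with respect to a tree T (whose node set is the set of voters of P), then the number of preferences in P is at most C(m,2) + 1. -/
/-! Along an edge `uv` of the tree the two preferences differ, so the edge separates some pair of
distinct candidates; single crossing says no other edge separates that pair. The edges therefore
inject into the `C(m,2)` unordered pairs of candidates, and a tree has `|V| - 1` edges. -/

/-- `P u` and `P v` order the pair `(x,y)` differently. -/
def Crosses {V C : Type*} (P : V → C → C → Prop) (u v : V) (x y : C) : Prop :=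
  ¬ (P u x y ↔ P v x y)

/-- A profile `P` indexed by the vertices of `G` is single crossing with respect to `G`:
for every pair of candidates, at most one edge of `G` separates the voters preferring
`x` over `y` from those preferring `y` over `x`. -/
def SingleCrossingWrt {V C : Type*} (G : SimpleGraph V) (P : V → C → C → Prop) : Prop :=
  ∀ x y : C, ∀ u v u' v' : V, G.Adj u v → G.Adj u' v' →
    Crosses P u v x y → Crosses P u' v' x y → s(u, v) = s(u', v')

/-- The pairwise majority relation of three preferences. -/
def Maj3 {C : Type*} (p q r : C → C → Prop) : C → C → Prop := fun x y =>
  (p x y ∧ q x y) ∨ (p x y ∧ r x y) ∨ (q x y ∧ r x y)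

/-- The triad majority property for a set of (strict) linear orders. -/
def TriadClosed {C : Type*} (Q : Set (C → C → Prop)) : Prop :=
  ∀ p q r, p ∈ Q → q ∈ Q → r ∈ Q →
    IsStrictTotalOrder C (Maj3 p q r) ∧ Maj3 p q r ∈ Q

/-- The triad majority closure of a set of linear orders. -/
def triadClosure {C : Type*} (P : Set (C → C → Prop)) : Set (C → C → Prop) :=
  ⋂₀ {Q | P ⊆ Q ∧ (∀ p ∈ Q, IsStrictTotalOrder C p) ∧ TriadClosed Q}

/-- The connected component of `u` in `G − r`: vertices reachable from `u` by a walk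
avoiding `r`. -/
def CompAvoid {V : Type*} (G : SimpleGraph V) (r u : V) : Set V :=
  {w | ∃ p : G.Walk u w, r ∉ p.support}

/-- A set of linear orders is single crossing with respect to some tree. -/
def SCTreeSet {C : Type*} (Q : Set (C → C → Prop)) : Prop :=
  ∃ (V : Type) (_ : Fintype V) (G : SimpleGraph V) (f : V → C → C → Prop),
    G.IsTree ∧ (∀ v, IsStrictTotalOrder C (f v)) ∧ Set.range f = Q ∧
      SingleCrossingWrt G f

theorem rel_iff_not_rel_swap {α : Type*} {r : α → α → Prop} [IsStrictTotalOrder α r]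
    {x y : α} (hxy : x ≠ y) : r x y ↔ ¬ r y x :=
  ⟨asymm, fun h => ((trichotomous_of r x y).resolve_right (not_or_intro hxy h))⟩

section Crosses

variable {V C : Type*} {P : V → C → C → Prop}

theorem crosses_comm_voters {u v : V} {x y : C} : Crosses P u v x y ↔ Crosses P v u x y :=
  not_congr Iff.comm

theorem crosses_comm_candidates (hlin : ∀ v, IsStrictTotalOrder C (P v)) {u v : V} {x y : C} :
    Crosses P u v x y ↔ Crosses P u v y x := by
  rcases eq_or_ne x y with rfl | hxy
  · rfl
  · unfold Crosses
    rw [@rel_iff_not_rel_swap _ _ (hlin u) _ _ hxy, @rel_iff_not_rel_swap _ _ (hlin v) _ _ hxy]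
    exact not_congr not_iff_not

theorem not_crosses_self (hlin : ∀ v, IsStrictTotalOrder C (P v)) (u v : V) (x : C) :
    ¬ Crosses P u v x x :=
  not_not_intro (iff_of_false ((hlin u).irrefl x) ((hlin v).irrefl x))

theorem exists_crosses_of_ne {u v : V} (h : P u ≠ P v) : ∃ x y, Crosses P u v x y := by
  by_contra! hP
  exact h (funext₂ fun x y => propext (not_not.mp (hP x y)))

def Separates (P : V → C → C → Prop) (e : Sym2 V) (d : Sym2 C) : Prop :=
  ∃ u v x y, e = s(u, v) ∧ d = s(x, y) ∧ Crosses P u v x y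

theorem crosses_of_separates (hlin : ∀ v, IsStrictTotalOrder C (P v)) {u v : V} {x y : C}
    (h : Separates P s(u, v) s(x, y)) : Crosses P u v x y := by
  obtain ⟨u', v', x', y', he, hd, hc⟩ := h
  have hc : Crosses P u v x' y' := by
    rcases Sym2.eq_iff.mp he with ⟨rfl, rfl⟩ | ⟨rfl, rfl⟩
    exacts [hc, crosses_comm_voters.mp hc]
  rcases Sym2.eq_iff.mp hd with ⟨rfl, rfl⟩ | ⟨rfl, rfl⟩
  exacts [hc, (crosses_comm_candidates hlin).mp hc]

variable {G : SimpleGraph V}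

theorem SingleCrossingWrt.eq_of_separates (hsc : SingleCrossingWrt G P)
    (hlin : ∀ v, IsStrictTotalOrder C (P v)) {e e' : Sym2 V} {d : Sym2 C}
    (he : e ∈ G.edgeSet) (he' : e' ∈ G.edgeSet)
    (hd : Separates P e d) (hd' : Separates P e' d) :
    e = e' := by
  induction e using Sym2.ind with | _ u v => ?_
  induction e' using Sym2.ind with | _ u' v' => ?_
  induction d using Sym2.ind with | _ x y => ?_
  exact hsc x y u v u' v' he he' (crosses_of_separates hlin hd) (crosses_of_separates hlin hd')

theorem exists_separates_of_adj (hlin : ∀ v, IsStrictTotalOrder C (P v))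
    (hne : ∀ u v, G.Adj u v → P u ≠ P v) {e : Sym2 V} (he : e ∈ G.edgeSet) :
    ∃ d : Sym2 C, ¬ d.IsDiag ∧ Separates P e d := by
  induction e using Sym2.ind with | _ u v => ?_
  obtain ⟨x, y, hc⟩ := exists_crosses_of_ne (hne u v he)
  have hxy : x ≠ y := by
    rintro rfl
    exact not_crosses_self hlin u v x hc
  exact ⟨s(x, y), Sym2.mk_isDiag_iff.not.mpr hxy, u, v, x, y, rfl, rfl, hc⟩

theorem SingleCrossingWrt.card_edgeFinset_le [Fintype C] [Fintype G.edgeSet]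
    (hsc : SingleCrossingWrt G P) (hlin : ∀ v, IsStrictTotalOrder C (P v))
    (hne : ∀ u v, G.Adj u v → P u ≠ P v) :
    G.edgeFinset.card ≤ (Fintype.card C).choose 2 := by
  choose d hdiag hsep using fun e : G.edgeSet => exists_separates_of_adj hlin hne e.2
  have hinj : Function.Injective
      fun e : G.edgeSet => (⟨d e, hdiag e⟩ : {d : Sym2 C // ¬ d.IsDiag}) :=
    fun e e' h => Subtype.ext <|
      hsc.eq_of_separates hlin e.2 e'.2 (hsep e) (Subtype.mk.inj h ▸ hsep e')
  classical
  rw [SimpleGraph.edgeFinset_card, ← Sym2.card_subtype_not_diag]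
  exact Fintype.card_le_of_injective _ hinj

end Crosses

/-- a profile of pairwise distinct linear orders single crossing with respect
to a tree has at most `C(m,2) + 1` preferences. -/
theorem stmt_0 {V C : Type*} [Fintype V] [Fintype C] {G : SimpleGraph V}
    (hT : G.IsTree) (P : V → C → C → Prop)
    (hlin : ∀ v, IsStrictTotalOrder C (P v))
    (hdist : Function.Injective P)
    (hsc : SingleCrossingWrt G P) :
    Fintype.card V ≤ (Fintype.card C).choose 2 + 1 := by
  classical
  have hedges := hsc.card_edgeFinset_le hlin fun _ _ hadj => hdist.ne hadj.ne
  have htree := hT.card_edgeFinset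
  omega
end

section
/- Let P be a profile of pairwise distinct linear orders over m candidates which is single crossing with respect to a tree T. Then every node of T has degree at most m - 1. -/
/-!
Fix a node `v` and read `P v` as the linear order `<` on the candidates. Every neighbour `u`
holds a different preference, and two strict linear orders on a finite set that agree on all
covering pairs `a ⋖ b` of `<` are equal, so `P u` reverses some covering pair of `P v`. That
pair is crossed on the edge `uv`, hence by single crossing on no other edge at `v`: sending
each neighbour to the lower end of its pair is injective, and it avoids the maximum of `<`.
-/

section CovBy

variable {α : Type*} [LinearOrder α]

theorem eq_lt_of_forall_covBy [LocallyFiniteOrder α] {s : α → α → Prop}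
    [IsStrictTotalOrder α s] (hcov : ∀ a b, a ⋖ b → s a b) : s = (· < ·) := by
  have hlt : ∀ {a b : α}, a < b → s a b := fun hab =>
    Relation.transGen_minimal hcov _ _ (transGen_covBy_of_lt hab)
  refine funext₂ fun a b => propext ⟨fun hs => ?_, hlt⟩
  rcases lt_trichotomy a b with hab | rfl | hba
  · exact hab
  · exact absurd hs (irrefl a)
  · exact absurd (hlt hba) (asymm hs)

theorem exists_covBy_not_of_ne_lt [LocallyFiniteOrder α] {s : α → α → Prop}
    [IsStrictTotalOrder α s] (h : s ≠ (· < ·)) : ∃ a b, a ⋖ b ∧ ¬ s a b := by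
  by_contra! hcov
  exact h (eq_lt_of_forall_covBy hcov)

theorem Nat.card_subtype_not_isMax_le [Finite α] :
    Nat.card {a : α // ¬IsMax a} ≤ Nat.card α - 1 := by
  rcases isEmpty_or_nonempty α with _ | _
  · simp
  · obtain ⟨m, hm⟩ := Finite.exists_max (id : α → α)
    have := Finite.card_subtype_lt (p := fun a : α => ¬IsMax a) (not_not.mpr fun x _ => hm x)
    omega

end CovBy

namespace SingleCrossingWrt

variable {V C : Type*} {G : SimpleGraph V} {P : V → C → C → Prop}

theorem eq_of_crosses_adj (hsc : SingleCrossingWrt G P) {v u u' : V} {x y : C}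
    (hu : G.Adj v u) (hu' : G.Adj v u') (h : Crosses P v u x y) (h' : Crosses P v u' x y) :
    u = u' :=
  Sym2.congr_right.mp (hsc x y v u v u' hu hu' h h')

theorem degree_le_of_eq_lt [Fintype V] [DecidableRel G.Adj] [Fintype C] [LinearOrder C]
    (hsc : SingleCrossingWrt G P) (hlin : ∀ u, IsStrictTotalOrder C (P u)) {v : V}
    (hv : P v = (· < ·)) (hne : ∀ u, G.Adj v u → P u ≠ P v) :
    G.degree v ≤ Fintype.card C - 1 := by
  let _ : LocallyFiniteOrder C := Fintype.toLocallyFiniteOrder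
  have hrev : ∀ u : G.neighborSet v, ∃ a b, a ⋖ b ∧ ¬ P u a b := fun u =>
    haveI := hlin u
    exists_covBy_not_of_ne_lt (hv ▸ hne u u.2)
  choose lo hi hcov hnot using hrev
  have hcross : ∀ u : G.neighborSet v, Crosses P v u (lo u) (hi u) := fun u hiff =>
    hnot u (hiff.mp (hv ▸ (hcov u).lt))
  have hinj : Function.Injective fun u => (⟨lo u, (hcov u).lt.not_isMax⟩ : {a // ¬IsMax a}) := by
    intro u u' h
    have hlo : lo u = lo u' := congrArg Subtype.val h
    have hhi : hi u = hi u' := (hcov u).unique_right (hlo ▸ hcov u')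
    refine Subtype.ext (hsc.eq_of_crosses_adj u.2 u'.2 (hcross u) ?_)
    rw [hlo, hhi]
    exact hcross u'
  rw [← G.card_neighborSet_eq_degree, ← Nat.card_eq_fintype_card, ← Nat.card_eq_fintype_card]
  exact (Nat.card_le_card_of_injective _ hinj).trans Nat.card_subtype_not_isMax_le

end SingleCrossingWrt

theorem stmt_1_general {V C : Type*} [Fintype V] [Fintype C] {G : SimpleGraph V}
    [DecidableRel G.Adj]
    (P : V → C → C → Prop)
    (hlin : ∀ v, IsStrictTotalOrder C (P v))
    (hdist : Function.Injective P)
    (hsc : SingleCrossingWrt G P) :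
    ∀ v : V, G.degree v ≤ Fintype.card C - 1 := by
  classical
  intro v
  have := hlin v
  let _ : LinearOrder C := linearOrderOfSTO (P v)
  exact hsc.degree_le_of_eq_lt hlin rfl fun u hu h => G.ne_of_adj hu (hdist h).symm

/-- in a single crossing tree for a profile of pairwise distinct preferences,
every node has degree at most `m - 1`. -/
theorem stmt_1 {V C : Type*} [Fintype V] [Fintype C] {G : SimpleGraph V}
    [DecidableRel G.Adj]
    (hT : G.IsTree) (P : V → C → C → Prop)
    (hlin : ∀ v, IsStrictTotalOrder C (P v))
    (hdist : Function.Injective P)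
    (hsc : SingleCrossingWrt G P) :
    ∀ v : V, G.degree v ≤ Fintype.card C - 1 :=
  stmt_1_general P hlin hdist hsc
end

section
/- Let P be a profile that is single crossing with respect to a tree T. Then for any three (not necessarily distinct) preferences p1, p2, p3 in P, the pairwise majority relation Maj(p1,p2,p3) is a linear order and belongs to P. -/
/-! In a connected graph any three vertices `v₁ v₂ v₃` admit a vertex `m` joined to each of
them by walks that pairwise share no edge (in a tree, `m` is the median of the three). By
single crossing, for each pair `(x, y)` at most one edge changes the order of `x` and `y`, so
`P m` agrees on `(x, y)` with at least two of `P v₁, P v₂, P v₃`, hence with their majority.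
Thus `Maj3 (P v₁) (P v₂) (P v₃) = P m`, which is a linear order of the profile. -/

namespace SimpleGraph

variable {V : Type*} {G : SimpleGraph V}

namespace Walk

theorem exists_walk_to_first_mem (S : Set V) {a b : V} (q : G.Walk a b) (hb : b ∈ S) :
    ∃ m ∈ S, ∃ r : G.Walk a m, ∀ v ∈ r.support, v ∈ S → v = m := by
  induction q with
  | nil => exact ⟨_, hb, nil, by simp⟩
  | @cons u v w h q ih =>
    by_cases hu : u ∈ S
    · exact ⟨u, hu, nil, by simp⟩
    · obtain ⟨m, hm, r, hr⟩ := ih hb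
      refine ⟨m, hm, cons h r, fun z hz hzS => ?_⟩
      rcases List.mem_cons.mp (support_cons h r ▸ hz) with rfl | hz
      · exact absurd hzS hu
      · exact hr z hz hzS

theorem edges_disjoint_of_support_inter_subsingleton {a b c d m : V} (r : G.Walk a b)
    (t : G.Walk c d) (h : ∀ v ∈ r.support, v ∈ t.support → v = m) :
    r.edges.Disjoint t.edges := by
  intro e her het
  induction e using Sym2.ind with
  | _ u v =>
    have hu := h u (r.fst_mem_support_of_mem_edges her) (t.fst_mem_support_of_mem_edges het)
    have hv := h v (r.snd_mem_support_of_mem_edges her) (t.snd_mem_support_of_mem_edges het)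
    exact G.ne_of_adj (r.adj_of_mem_edges her) (hu.trans hv.symm)

theorem exists_crosses_of_crosses {C : Type*} (P : V → C → C → Prop) (x y : C) {a b : V}
    (q : G.Walk a b) (hab : Crosses P a b x y) :
    ∃ u v, G.Adj u v ∧ s(u, v) ∈ q.edges ∧ Crosses P u v x y := by
  induction q with
  | nil => exact absurd Iff.rfl hab
  | @cons u v w h q ih =>
    by_cases huv : Crosses P u v x y
    · exact ⟨u, v, h, by simp, huv⟩
    · obtain ⟨s, t, hadj, he, hc⟩ := ih fun hvw => hab ((not_not.mp huv).trans hvw)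
      exact ⟨s, t, hadj, by simp [he], hc⟩

end Walk

theorem Preconnected.exists_edge_disjoint_walks (hG : G.Preconnected) (v₁ v₂ v₃ : V) :
    ∃ (m : V) (w₁ : G.Walk m v₁) (w₂ : G.Walk m v₂) (w₃ : G.Walk m v₃),
      w₁.edges.Disjoint w₂.edges ∧ w₁.edges.Disjoint w₃.edges ∧
        w₂.edges.Disjoint w₃.edges := by
  classical
  obtain ⟨p, hp⟩ := hG.exists_isPath v₁ v₂
  obtain ⟨q⟩ := hG v₃ v₁
  obtain ⟨m, hm, r, hr⟩ := q.exists_walk_to_first_mem {v | v ∈ p.support} p.start_mem_support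
  have htake_drop : (p.takeUntil m hm).edges.Disjoint (p.dropUntil m hm).edges := by
    have hnodup := hp.isTrail.edges_nodup
    rw [← p.take_spec hm, Walk.edges_append] at hnodup
    exact List.disjoint_of_nodup_append hnodup
  have hr_take : r.edges.Disjoint (p.takeUntil m hm).edges :=
    r.edges_disjoint_of_support_inter_subsingleton _
      fun v hv hvt => hr v hv (p.support_takeUntil_subset_support hm hvt)
  have hr_drop : r.edges.Disjoint (p.dropUntil m hm).edges :=
    r.edges_disjoint_of_support_inter_subsingleton _
      fun v hv hvd => hr v hv (p.support_dropUntil_subset_support hm hvd)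
  refine ⟨m, (p.takeUntil m hm).reverse, p.dropUntil m hm, r.reverse, ?_, ?_, ?_⟩
  · simpa [Walk.edges_reverse] using htake_drop
  · simpa [Walk.edges_reverse] using hr_take.symm
  · simpa [Walk.edges_reverse] using hr_drop.symm

end SimpleGraph

theorem SingleCrossingWrt.iff_or_iff_of_edges_disjoint {V C : Type*} {G : SimpleGraph V}
    {P : V → C → C → Prop} (hsc : SingleCrossingWrt G P) (x y : C) {m c₁ c₂ : V}
    (w₁ : G.Walk m c₁) (w₂ : G.Walk m c₂) (hdisj : w₁.edges.Disjoint w₂.edges) :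
    (P m x y ↔ P c₁ x y) ∨ (P m x y ↔ P c₂ x y) := by
  by_contra h
  obtain ⟨h₁, h₂⟩ := not_or.mp h
  obtain ⟨u, v, huv, he, hc⟩ := w₁.exists_crosses_of_crosses P x y h₁
  obtain ⟨u', v', huv', he', hc'⟩ := w₂.exists_crosses_of_crosses P x y h₂
  exact hdisj he (hsc x y u v u' v' huv huv' hc hc' ▸ he')

theorem iff_maj3_of_iff_or_iff {a b c d : Prop} (hbc : (a ↔ b) ∨ (a ↔ c))
    (hbd : (a ↔ b) ∨ (a ↔ d)) (hcd : (a ↔ c) ∨ (a ↔ d)) :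
    a ↔ (b ∧ c) ∨ (b ∧ d) ∨ (c ∧ d) := by
  tauto

theorem stmt_4_general {V C : Type*} {G : SimpleGraph V}
    (hT : G.IsTree) (P : V → C → C → Prop)
    (hlin : ∀ v, IsStrictTotalOrder C (P v))
    (hsc : SingleCrossingWrt G P) :
    ∀ v₁ v₂ v₃ : V,
      IsStrictTotalOrder C (Maj3 (P v₁) (P v₂) (P v₃)) ∧
      ∃ w : V, P w = Maj3 (P v₁) (P v₂) (P v₃) := by
  intro v₁ v₂ v₃
  obtain ⟨m, w₁, w₂, w₃, h₁₂, h₁₃, h₂₃⟩ :=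
    hT.connected.preconnected.exists_edge_disjoint_walks v₁ v₂ v₃
  have hm : P m = Maj3 (P v₁) (P v₂) (P v₃) := by
    ext x y
    exact iff_maj3_of_iff_or_iff (hsc.iff_or_iff_of_edges_disjoint x y w₁ w₂ h₁₂)
      (hsc.iff_or_iff_of_edges_disjoint x y w₁ w₃ h₁₃)
      (hsc.iff_or_iff_of_edges_disjoint x y w₂ w₃ h₂₃)
  exact ⟨hm ▸ hlin m, m, hm⟩

/-- for a profile single crossing with respect to a tree, the pairwise
majority relation of any three (not necessarily distinct) preferences of the profile is a
linear order and belongs to the profile. -/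
theorem stmt_4 {V C : Type*} [Fintype V] {G : SimpleGraph V}
    (hT : G.IsTree) (P : V → C → C → Prop)
    (hlin : ∀ v, IsStrictTotalOrder C (P v))
    (hsc : SingleCrossingWrt G P) :
    ∀ v₁ v₂ v₃ : V,
      IsStrictTotalOrder C (Maj3 (P v₁) (P v₂) (P v₃)) ∧
      ∃ w : V, P w = Maj3 (P v₁) (P v₂) (P v₃) :=
  stmt_4_general hT P hlin hsc
end

section
/- For three nodes u1, u2, u3 of a tree T and their median node w (the unique node on all three pairwise paths), if a profile is single crossing with respect to T, then the preference at w equals the majority relation of the preferences at u1, u2, u3: for every pair of candidates x, y, the preference at w prefers x to y if and only if at least two of the preferences at u1, u2, u3 prefer x to y. -/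
/-
If `w` crossed both `a` and `b` on the pair `(x, y)` while lying on the `a`–`b` path, each half
of that path would contain an edge crossing on `(x, y)`; single crossing makes the two edges
equal, which a path forbids. So `w` agrees with at least two of `u₁, u₂, u₃` on every pair,
hence with their majority.
-/

open SimpleGraph

lemma exists_crosses_mem_edges {V C : Type*} {G : SimpleGraph V} (P : V → C → C → Prop)
    {x y : C} {a b : V} (q : G.Walk a b) (hab : Crosses P a b x y) :
    ∃ c d, G.Adj c d ∧ Crosses P c d x y ∧ s(c, d) ∈ q.edges := by
  induction q with
  | nil => exact absurd Iff.rfl hab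
  | @cons u v _ huv q ih =>
    by_cases huv' : Crosses P u v x y
    · exact ⟨u, v, huv, huv', by simp⟩
    · obtain ⟨c, d, hcd, hcross, hmem⟩ := ih fun hvb => hab ((not_not.mp huv').trans hvb)
      exact ⟨c, d, hcd, hcross, by simp [hmem]⟩

lemma SingleCrossingWrt.not_crosses_and_crosses {V C : Type*} {G : SimpleGraph V}
    {P : V → C → C → Prop} (hsc : SingleCrossingWrt G P) (hG : G.Preconnected)
    {x y : C} {a b w : V} (hab : ∀ p : G.Walk a b, w ∈ p.support) :
    ¬(Crosses P w a x y ∧ Crosses P w b x y) := by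
  classical
  rintro ⟨hwa, hwb⟩
  obtain ⟨q⟩ := hG a b
  let p := q.bypass
  have hw : w ∈ p.support := hab p
  obtain ⟨c₁, d₁, hadj₁, hcross₁, hmem₁⟩ :=
    exists_crosses_mem_edges P (p.takeUntil w hw) fun h => hwa h.symm
  obtain ⟨c₂, d₂, hadj₂, hcross₂, hmem₂⟩ := exists_crosses_mem_edges P (p.dropUntil w hw) hwb
  have hsame : s(c₁, d₁) = s(c₂, d₂) := hsc x y c₁ d₁ c₂ d₂ hadj₁ hadj₂ hcross₁ hcross₂
  have hnodup : (p.takeUntil w hw).edges ++ (p.dropUntil w hw).edges |>.Nodup := by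
    rw [← Walk.edges_append, Walk.take_spec]
    exact q.bypass_isPath.isTrail.edges_nodup
  exact List.disjoint_of_nodup_append hnodup hmem₁ (hsame ▸ hmem₂)

theorem stmt_5_general {V C : Type*} {G : SimpleGraph V}
    (hT : G.IsTree) (P : V → C → C → Prop)
    (hsc : SingleCrossingWrt G P)
    (u₁ u₂ u₃ w : V)
    (h12 : ∀ p : G.Walk u₁ u₂, w ∈ p.support)
    (h23 : ∀ p : G.Walk u₂ u₃, w ∈ p.support)
    (h31 : ∀ p : G.Walk u₃ u₁, w ∈ p.support) :
    ∀ x y : C, P w x y ↔ Maj3 (P u₁) (P u₂) (P u₃) x y := by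
  intro x y
  have hG := hT.connected.preconnected
  have k12 : ¬(Crosses P w u₁ x y ∧ Crosses P w u₂ x y) := hsc.not_crosses_and_crosses hG h12
  have k23 : ¬(Crosses P w u₂ x y ∧ Crosses P w u₃ x y) := hsc.not_crosses_and_crosses hG h23
  have k31 : ¬(Crosses P w u₃ x y ∧ Crosses P w u₁ x y) := hsc.not_crosses_and_crosses hG h31
  simp only [Crosses] at k12 k23 k31
  unfold Maj3
  tauto

/-- the preference at the median node `w` of three nodes `u₁, u₂, u₃` of a
single crossing tree equals the pairwise majority relation of the preferences at
`u₁, u₂, u₃`. (`w` lies on all three pairwise paths: in a tree, a node lies on the unique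
path between `a` and `b` iff it lies on every walk from `a` to `b`.) -/
theorem stmt_5 {V C : Type*} [Fintype V] {G : SimpleGraph V}
    (hT : G.IsTree) (P : V → C → C → Prop)
    (hlin : ∀ v, IsStrictTotalOrder C (P v))
    (hsc : SingleCrossingWrt G P)
    (u₁ u₂ u₃ w : V)
    (h12 : ∀ p : G.Walk u₁ u₂, w ∈ p.support)
    (h23 : ∀ p : G.Walk u₂ u₃, w ∈ p.support)
    (h31 : ∀ p : G.Walk u₃ u₁, w ∈ p.support) :
    ∀ x y : C, P w x y ↔ Maj3 (P u₁) (P u₂) (P u₃) x y :=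
  stmt_5_general hT P hsc u₁ u₂ u₃ w h12 h23 h31
end

section
/- Let a profile of distinct preferences be single crossing with respect to a tree T, let u be an internal node of T of degree at least 3 with neighbors u1, u2, u3 lying in distinct components T1, T2, T3 of T − u, and let v1 ∈ T1, v2 ∈ T2, v3 ∈ T3 be any nodes. Then the preference at u equals the pairwise majority order of the preferences at v1, v2, and v3. -/
/-!
Fix candidates `x, y`. A walk from `u` to `vᵢ` through `uᵢ` stays in `{u} ∪ Tᵢ`, and these sets
pairwise meet only in `u` because every edge of a tree is a bridge. If `u` disagreed on `x, y`
with both `vᵢ` and `vⱼ`, each of the two walks would contain an edge at which the preference on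
`x, y` flips, and these edges would be distinct, contradicting single crossing. So `u` agrees
with at least two of `v₁, v₂, v₃` on every pair, which is exactly agreement with their majority.
-/

namespace SimpleGraph

variable {V : Type*} {G : SimpleGraph V}

lemma Walk.exists_adj_not_iff_of_not_iff {Q : V → Prop} {a b : V} (p : G.Walk a b)
    (h : ¬(Q a ↔ Q b)) :
    ∃ c d, G.Adj c d ∧ c ∈ p.support ∧ d ∈ p.support ∧ ¬(Q c ↔ Q d) := by
  obtain ⟨d, hd, hfst, hsnd⟩ :=
    p.exists_boundary_dart {w | Q w ↔ Q a} Iff.rfl fun hb => h hb.symm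
  exact ⟨d.fst, d.snd, d.adj, p.dart_fst_mem_support_of_mem_darts hd,
    p.dart_snd_mem_support_of_mem_darts hd, fun hcd => hsnd (hcd.symm.trans hfst)⟩

lemma Walk.mem_compAvoid_of_mem_support {r a b : V} (p : G.Walk a b) (hr : r ∉ p.support)
    {w : V} (hw : w ∈ p.support) : w ∈ CompAvoid G r a := by
  classical
  exact ⟨p.takeUntil w hw, fun hrw => hr (p.support_takeUntil_subset_support hw hrw)⟩

lemma exists_adj_not_iff_mem_insert_compAvoid {Q : V → Prop} {u a v : V} (ha : G.Adj u a)
    (hv : v ∈ CompAvoid G u a) (h : ¬(Q u ↔ Q v)) :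
    ∃ c d, G.Adj c d ∧ c ∈ insert u (CompAvoid G u a) ∧ d ∈ insert u (CompAvoid G u a) ∧
      ¬(Q c ↔ Q d) := by
  obtain ⟨p, hp⟩ := hv
  have hsupport : ∀ w ∈ (Walk.cons ha p).support, w ∈ insert u (CompAvoid G u a) := by
    intro w hw
    rw [Walk.support_cons, List.mem_cons] at hw
    exact hw.imp_right (p.mem_compAvoid_of_mem_support hp)
  obtain ⟨c, d, hcd, hc, hd, hcr⟩ := (Walk.cons ha p).exists_adj_not_iff_of_not_iff h
  exact ⟨c, d, hcd, hsupport c hc, hsupport d hd, hcr⟩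

lemma IsAcyclic.disjoint_compAvoid (hG : G.IsAcyclic) {u a b : V} (ha : G.Adj u a)
    (hb : G.Adj u b) (hab : a ≠ b) : Disjoint (CompAvoid G u a) (CompAvoid G u b) := by
  rw [Set.disjoint_left]
  rintro w ⟨p, hp⟩ ⟨q, hq⟩
  have hbridge := isBridge_iff_forall_walk_mem_edges.mp
    (isAcyclic_iff_forall_adj_isBridge.mp hG hb) (Walk.cons ha (p.append q.reverse))
  rw [Walk.edges_cons, List.mem_cons] at hbridge
  rcases hbridge with hedge | hedge
  · exact hab (Sym2.congr_right.mp hedge).symm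
  · have hu := (p.append q.reverse).fst_mem_support_of_mem_edges hedge
    rw [Walk.mem_support_append_iff, Walk.support_reverse, List.mem_reverse] at hu
    exact hu.elim hp hq

end SimpleGraph

lemma SingleCrossingWrt.iff_or_iff_of_mem_compAvoid {V C : Type*} {G : SimpleGraph V}
    {P : V → C → C → Prop} (hsc : SingleCrossingWrt G P) (hG : G.IsAcyclic)
    {u a b va vb : V} (ha : G.Adj u a) (hb : G.Adj u b) (hab : a ≠ b)
    (hva : va ∈ CompAvoid G u a) (hvb : vb ∈ CompAvoid G u b) (x y : C) :
    (P u x y ↔ P va x y) ∨ (P u x y ↔ P vb x y) := by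
  by_contra hcon
  obtain ⟨hna, hnb⟩ := not_or.mp hcon
  obtain ⟨c, d, hcd, hca, hda, hcr⟩ :=
    SimpleGraph.exists_adj_not_iff_mem_insert_compAvoid (Q := fun w => P w x y) ha hva hna
  obtain ⟨c', d', hcd', hcb, hdb, hcr'⟩ :=
    SimpleGraph.exists_adj_not_iff_mem_insert_compAvoid (Q := fun w => P w x y) hb hvb hnb
  have hedge : s(c, d) = s(c', d') := hsc x y c d c' d' hcd hcd' hcr hcr'
  have hbranches : ∀ w ∈ insert u (CompAvoid G u a), w ∈ insert u (CompAvoid G u b) → w = u := by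
    rintro w (hwu | hwA) (hwu' | hwB)
    exacts [hwu, hwu, hwu',
      absurd hwB ((hG.disjoint_compAvoid ha hb hab).notMem_of_mem_left hwA)]
  have hendpoint : ∀ w ∈ s(c', d'), w ∈ insert u (CompAvoid G u b) := by
    intro w hw
    rcases Sym2.mem_iff.mp hw with rfl | rfl
    exacts [hcb, hdb]
  have hcu := hbranches c hca (hendpoint c (hedge ▸ Sym2.mem_mk_left c d))
  have hdu := hbranches d hda (hendpoint d (hedge ▸ Sym2.mem_mk_right c d))
  exact hcd.ne (hcu.trans hdu.symm)

theorem stmt_10_general {V C : Type*} {G : SimpleGraph V}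
    (hT : G.IsTree) (P : V → C → C → Prop)
    (hsc : SingleCrossingWrt G P)
    (u u₁ u₂ u₃ v₁ v₂ v₃ : V)
    (h1 : G.Adj u u₁) (h2 : G.Adj u u₂) (h3 : G.Adj u u₃)
    (h12 : u₁ ≠ u₂) (h13 : u₁ ≠ u₃) (h23 : u₂ ≠ u₃)
    (hv1 : v₁ ∈ CompAvoid G u u₁) (hv2 : v₂ ∈ CompAvoid G u u₂)
    (hv3 : v₃ ∈ CompAvoid G u u₃) :
    ∀ x y : C, P u x y ↔ Maj3 (P v₁) (P v₂) (P v₃) x y := by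
  intro x y
  have h₁₂ := hsc.iff_or_iff_of_mem_compAvoid hT.isAcyclic h1 h2 h12 hv1 hv2 x y
  have h₁₃ := hsc.iff_or_iff_of_mem_compAvoid hT.isAcyclic h1 h3 h13 hv1 hv3 x y
  have h₂₃ := hsc.iff_or_iff_of_mem_compAvoid hT.isAcyclic h2 h3 h23 hv2 hv3 x y
  unfold Maj3
  tauto

/-- for a profile of distinct preferences single crossing with respect to a
tree, if `u` has three distinct neighbors `u₁, u₂, u₃` and `vᵢ` lies in the component of
`uᵢ` in `T − u`, then the preference at `u` is the pairwise majority order of the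
preferences at `v₁, v₂, v₃`. -/
theorem stmt_10 {V C : Type*} [Fintype V] {G : SimpleGraph V}
    (hT : G.IsTree) (P : V → C → C → Prop)
    (hlin : ∀ v, IsStrictTotalOrder C (P v))
    (hdist : Function.Injective P)
    (hsc : SingleCrossingWrt G P)
    (u u₁ u₂ u₃ v₁ v₂ v₃ : V)
    (h1 : G.Adj u u₁) (h2 : G.Adj u u₂) (h3 : G.Adj u u₃)
    (h12 : u₁ ≠ u₂) (h13 : u₁ ≠ u₃) (h23 : u₂ ≠ u₃)
    (hv1 : v₁ ∈ CompAvoid G u u₁) (hv2 : v₂ ∈ CompAvoid G u u₂)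
    (hv3 : v₃ ∈ CompAvoid G u u₃) :
    ∀ x y : C, P u x y ↔ Maj3 (P v₁) (P v₂) (P v₃) x y :=
  stmt_10_general hT P hsc u u₁ u₂ u₃ v₁ v₂ v₃ h1 h2 h3 h12 h13 h23 hv1 hv2 hv3
end

section
/- Let a profile of distinct preferences over candidates c1 < c2 < ... < cm (in the order given by the preference at node v) be single crossing with respect to a tree T. Then for every i in [m−1], at most one neighbor u of v has a preference ranking c_{i+1} above c_i; moreover every neighbor u of v has some i with c_{i+1} preferred over c_i at u. -/
theorem Fin.rel_of_lt_of_forall_rel_succ {β : Type*} (r : β → β → Prop) [IsTrans β r] {m : ℕ}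
    (f : Fin m → β) (h : ∀ i (hi : i + 1 < m), r (f ⟨i, Nat.lt_of_succ_lt hi⟩) (f ⟨i + 1, hi⟩))
    {a b : Fin m} (hab : a < b) : r (f a) (f b) := by
  cases m with
  | zero => exact a.elim0
  | succ n => exact (Fin.liftFun_iff_succ r).2 (fun i ↦ h i (Nat.succ_lt_succ i.2)) hab

theorem eq_of_forall_rel_succ {C : Type*} {m : ℕ} {r s : C → C → Prop} [IsStrictOrder C r]
    (c : Fin m ≃ C)
    (hr : ∀ i (hi : i + 1 < m), r (c ⟨i, Nat.lt_of_succ_lt hi⟩) (c ⟨i + 1, hi⟩))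
    (hs : ∀ i j, s (c i) (c j) ↔ i < j) : r = s := by
  funext x y
  obtain ⟨i, rfl⟩ := c.surjective x
  obtain ⟨j, rfl⟩ := c.surjective y
  rw [hs, eq_iff_iff]
  refine ⟨fun hij ↦ ?_, Fin.rel_of_lt_of_forall_rel_succ r c hr⟩
  rcases lt_trichotomy i j with hlt | rfl | hgt
  · exact hlt
  · exact absurd hij (irrefl _)
  · exact absurd (Fin.rel_of_lt_of_forall_rel_succ r c hr hgt) (asymm hij)

theorem SingleCrossingWrt.eq_of_adj_of_crosses {V C : Type*} {G : SimpleGraph V}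
    {P : V → C → C → Prop} (hsc : SingleCrossingWrt G P) {v u u' : V} {x y : C}
    (hu : G.Adj v u) (hu' : G.Adj v u') (hx : Crosses P v u x y) (hx' : Crosses P v u' x y) :
    u = u' := by
  rcases Sym2.eq_iff.mp (hsc x y v u v u' hu hu' hx hx') with ⟨-, h⟩ | ⟨h, -⟩
  · exact h
  · exact absurd h (G.ne_of_adj hu')

theorem stmt_11_general {V C : Type*} {m : ℕ} {G : SimpleGraph V}
    (P : V → C → C → Prop)
    (hlin : ∀ v, IsStrictTotalOrder C (P v))
    (hdist : Function.Injective P)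
    (hsc : SingleCrossingWrt G P)
    (v : V) (c : Fin m ≃ C)
    (hv : ∀ i j : Fin m, P v (c i) (c j) ↔ i < j) :
    (∀ i : ℕ, ∀ hi : i + 1 < m, ∀ u u' : V, G.Adj v u → G.Adj v u' →
        P u (c ⟨i + 1, hi⟩) (c ⟨i, Nat.lt_of_succ_lt hi⟩) →
        P u' (c ⟨i + 1, hi⟩) (c ⟨i, Nat.lt_of_succ_lt hi⟩) → u = u') ∧
    ∀ u : V, G.Adj v u → ∃ i : ℕ, ∃ hi : i + 1 < m,
        P u (c ⟨i + 1, hi⟩) (c ⟨i, Nat.lt_of_succ_lt hi⟩) := by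
  constructor
  · intro i hi u u' hu hu' hPu hPu'
    have hPv : ¬ P v (c ⟨i + 1, hi⟩) (c ⟨i, Nat.lt_of_succ_lt hi⟩) := by
      simp only [hv, Fin.mk_lt_mk]
      omega
    exact hsc.eq_of_adj_of_crosses hu hu' (fun h ↦ hPv (h.2 hPu)) (fun h ↦ hPv (h.2 hPu'))
  · intro u hu
    by_contra! hsorted
    have hstep : ∀ i (hi : i + 1 < m), P u (c ⟨i, Nat.lt_of_succ_lt hi⟩) (c ⟨i + 1, hi⟩) := by
      intro i hi
      have hne : c ⟨i, Nat.lt_of_succ_lt hi⟩ ≠ c ⟨i + 1, hi⟩ := by simp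
      exact (trichotomous_of (P u) _ _).resolve_right (not_or.2 ⟨hne, hsorted i hi⟩)
    exact G.ne_of_adj hu (hdist (eq_of_forall_rel_succ c hstep hv)).symm

/-- let a profile of distinct preferences be single crossing with respect to
a tree, and let the preference at `v` be `c 0 ≻ c 1 ≻ ⋯ ≻ c (m-1)`. Then for each
`i < m - 1` at most one neighbor of `v` ranks `c (i+1)` above `c i`, and every neighbor of
`v` ranks `c (i+1)` above `c i` for some `i`. -/
theorem stmt_11 {V C : Type*} [Fintype V] {m : ℕ} {G : SimpleGraph V}
    (hT : G.IsTree) (P : V → C → C → Prop)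
    (hlin : ∀ v, IsStrictTotalOrder C (P v))
    (hdist : Function.Injective P)
    (hsc : SingleCrossingWrt G P)
    (v : V) (c : Fin m ≃ C)
    (hv : ∀ i j : Fin m, P v (c i) (c j) ↔ i < j) :
    (∀ i : ℕ, ∀ hi : i + 1 < m, ∀ u u' : V, G.Adj v u → G.Adj v u' →
        P u (c ⟨i + 1, hi⟩) (c ⟨i, Nat.lt_of_succ_lt hi⟩) →
        P u' (c ⟨i + 1, hi⟩) (c ⟨i, Nat.lt_of_succ_lt hi⟩) → u = u') ∧
    ∀ u : V, G.Adj v u → ∃ i : ℕ, ∃ hi : i + 1 < m,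
        P u (c ⟨i + 1, hi⟩) (c ⟨i, Nat.lt_of_succ_lt hi⟩) :=
  stmt_11_general P hlin hdist hsc v c hv
end

section
/- A profile P with repeated preferences is single crossing with respect to some tree if and only if the profile P' obtained from P by removing duplicate preferences is single crossing with respect to some tree. -/
/-!
Only the converse needs an argument. Given a single-crossing tree `T` whose vertices carry the
distinct preferences, send each vertex of `T` to some voter holding its preference. The image
of `T`, together with all edges between voters sharing a preference, is a connected graph on
the voters; its edges between equal preferences separate no pair of candidates, and its image
edges inherit the single-crossing property from `T`. Single crossing passes to subgraphs, so
any spanning tree of this graph works.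
-/

open SimpleGraph

def fiberGraph {V X : Type*} (P : V → X) : SimpleGraph V :=
  SimpleGraph.fromRel fun u v => P u = P v

section Graph

variable {V W X : Type*}

lemma SimpleGraph.Reachable.map_apply {G : SimpleGraph V} (φ : V → W) {a b : V}
    (h : G.Reachable a b) : (G.map φ).Reachable (φ a) (φ b) := by
  rw [reachable_iff_reflTransGen] at h ⊢
  refine Relation.ReflTransGen.lift' φ (fun c d hcd => ?_) _ _ h
  by_cases he : φ c = φ d
  · show Relation.ReflTransGen _ (φ c) (φ d)
    rw [he]
  · exact .single ⟨he, c, d, hcd, rfl, rfl⟩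

lemma SimpleGraph.Connected.map_sup_fiberGraph {G : SimpleGraph V} (hG : G.Connected)
    (φ : V → W) {P : W → X} (hφ : ∀ w, ∃ a, P (φ a) = P w) :
    (G.map φ ⊔ fiberGraph P).Connected := by
  have hrep : ∀ w, ∃ a, (G.map φ ⊔ fiberGraph P).Reachable (φ a) w := by
    intro w
    obtain ⟨a, ha⟩ := hφ w
    refine ⟨a, ?_⟩
    by_cases he : φ a = w
    · exact he ▸ Reachable.refl _
    · exact Adj.reachable (Or.inr ⟨he, Or.inl ha⟩)
  obtain ⟨a₀⟩ := hG.nonempty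
  refine (connected_iff_exists_forall_reachable _).mpr ⟨φ a₀, fun w => ?_⟩
  obtain ⟨a, ha⟩ := hrep w
  exact (((hG a₀ a).map_apply φ).mono le_sup_left).trans ha

end Graph

section SingleCrossing

variable {V W C : Type*}

lemma SingleCrossingWrt.anti {G H : SimpleGraph V} {P : V → C → C → Prop} (hle : G ≤ H)
    (hP : SingleCrossingWrt H P) : SingleCrossingWrt G P :=
  fun x y u v u' v' huv hu'v' => hP x y u v u' v' (hle huv) (hle hu'v')

lemma SingleCrossingWrt.map {G : SimpleGraph V} {f : V → C → C → Prop}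
    (hf : SingleCrossingWrt G f) {P : W → C → C → Prop} {φ : V → W} (hφ : ∀ a, P (φ a) = f a) :
    SingleCrossingWrt (G.map φ) P := by
  rintro x y _ _ _ _ ⟨-, a, b, hab, rfl, rfl⟩ ⟨-, a', b', hab', rfl, rfl⟩ hc hc'
  simp only [Crosses, hφ] at hc hc'
  rw [← Sym2.map_mk, ← Sym2.map_mk, hf x y a b a' b' hab hab' hc hc']

lemma not_crosses_of_fiberGraph_adj {P : V → C → C → Prop} {u v : V} (h : (fiberGraph P).Adj u v)
    (x y : C) : ¬ Crosses P u v x y := by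
  obtain ⟨-, he | he⟩ := h <;> simp [Crosses, he]

lemma SingleCrossingWrt.sup_fiberGraph {G : SimpleGraph V} {P : V → C → C → Prop}
    (hP : SingleCrossingWrt G P) : SingleCrossingWrt (G ⊔ fiberGraph P) P := by
  rintro x y u v u' v' (huv | huv) (hu'v' | hu'v') hc hc'
  · exact hP x y u v u' v' huv hu'v' hc hc'
  · exact absurd hc' (not_crosses_of_fiberGraph_adj hu'v' x y)
  · exact absurd hc (not_crosses_of_fiberGraph_adj huv x y)
  · exact absurd hc (not_crosses_of_fiberGraph_adj huv x y)

end SingleCrossing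

theorem stmt_12_general {V C : Type} [Fintype V] (P : V → C → C → Prop)
    (hlin : ∀ v, IsStrictTotalOrder C (P v)) :
    (∃ G : SimpleGraph V, G.IsTree ∧ SingleCrossingWrt G P) ↔
      SCTreeSet (Set.range P) := by
  refine ⟨fun ⟨G, hG, hP⟩ => ⟨V, inferInstance, G, P, hG, hlin, rfl, hP⟩, ?_⟩
  rintro ⟨V₁, -, G₁, f, hG₁, -, hrange, hf⟩
  choose φ hφ using fun a => (hrange ▸ Set.mem_range_self a : f a ∈ Set.range P)
  have hcover : ∀ v, ∃ a, P (φ a) = P v := fun v =>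
    (hrange.symm ▸ Set.mem_range_self v : P v ∈ Set.range f).imp fun a ha => (hφ a).trans ha
  obtain ⟨T, hTle, hT⟩ := (hG₁.connected.map_sup_fiberGraph _ hcover).exists_isTree_le
  exact ⟨T, hT, (hf.map hφ).sup_fiberGraph.anti hTle⟩

/-- a profile `P` (possibly with repeated preferences) is single crossing
with respect to some tree on its voter set iff the profile of its distinct preferences
(the range of `P`) is single crossing with respect to some tree. -/
theorem stmt_12 {V C : Type} [Fintype V] [Nonempty V] (P : V → C → C → Prop)
    (hlin : ∀ v, IsStrictTotalOrder C (P v)) :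
    (∃ G : SimpleGraph V, G.IsTree ∧ SingleCrossingWrt G P) ↔
      SCTreeSet (Set.range P) :=
  stmt_12_general P hlin
end

section
/- If a set Q of linear orders is single crossing with respect to a tree and P ⊆ Q, then every linear order in the triad majority closure of P is obtainable by finitely many applications of the ternary majority operation starting from P; consequently the triad majority closure of P is finite with size at most C(m,2)+1 when its elements are distinct linear orders over m candidates. -/
/-- Linear orders obtainable from `P` by finitely many applications of the ternary
majority operation (applied whenever the pairwise majority relation is a linear order). -/
inductive TriadGen {C : Type*} (P : Set (C → C → Prop)) : (C → C → Prop) → Prop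
  | base : ∀ p ∈ P, TriadGen P p
  | maj : ∀ p q r, TriadGen P p → TriadGen P q → TriadGen P r →
      IsStrictTotalOrder C (Maj3 p q r) → TriadGen P (Maj3 p q r)

namespace SimpleGraph

variable {V : Type*} {G : SimpleGraph V}

lemma Connected.exists_adj_dist_lt (hG : G.Connected) (r : V) {v : V} (hv : v ≠ r) :
    ∃ u, G.Adj u v ∧ G.dist r u < G.dist r v := by
  obtain ⟨p, hp⟩ := hG.exists_walk_length_eq_dist v r
  cases p with
  | nil => exact absurd rfl hv
  | cons hadj p =>
    refine ⟨_, hadj.symm, ?_⟩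
    have := dist_le p
    rw [Walk.length_cons] at hp
    rw [dist_comm, dist_comm (u := r)]
    omega

lemma Connected.exists_adj_dist_lt_ne_of_mem_range {β : Type*} {f : V → β} (hG : G.Connected)
    (r : V) {a : β} (ha : a ∈ Set.range f) (har : a ≠ f r) :
    ∃ u v, G.Adj u v ∧ G.dist r u < G.dist r v ∧ f u ≠ a ∧ f v = a := by
  classical
  obtain ⟨v₀, hv₀⟩ := ha
  have hex : ∃ n, ∃ v, f v = a ∧ G.dist r v = n := ⟨_, v₀, hv₀, rfl⟩
  obtain ⟨v, hv, hvn⟩ := Nat.find_spec hex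
  obtain ⟨u, huv, hu⟩ := hG.exists_adj_dist_lt r (v := v) (by rintro rfl; exact har hv.symm)
  refine ⟨u, v, huv, hu, fun hua => ?_, hv⟩
  exact (Nat.find_min' hex ⟨u, hua, rfl⟩).not_gt (hvn ▸ hu)

lemma Walk.exists_walk_meeting_set_at_end {u v : V} (p : G.Walk u v) {S : Set V} (hv : v ∈ S) :
    ∃ m ∈ S, ∃ q : G.Walk u m, ∀ z ∈ q.support, z ∈ S → z = m := by
  induction p with
  | nil => exact ⟨_, hv, Walk.nil, by simp⟩
  | @cons u c v hadj p ih =>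
    by_cases hu : u ∈ S
    · exact ⟨u, hu, Walk.nil, by simp⟩
    · obtain ⟨m, hm, q, hq⟩ := ih hv
      refine ⟨m, hm, Walk.cons hadj q, ?_⟩
      rintro z hz hzS
      rcases List.mem_cons.mp (Walk.support_cons hadj q ▸ hz) with rfl | hz
      · exact absurd hzS hu
      · exact hq z hz hzS

lemma Walk.disjoint_edges_of_forall_mem_support {a b c d m : V} (p : G.Walk a b)
    (q : G.Walk c d) (h : ∀ z ∈ p.support, z ∈ q.support → z = m) :
    p.edges.Disjoint q.edges := by
  intro e hp hq
  induction e using Sym2.ind with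
  | _ x y =>
    have hx := h x (p.fst_mem_support_of_mem_edges hp) (q.fst_mem_support_of_mem_edges hq)
    have hy := h y (p.snd_mem_support_of_mem_edges hp) (q.snd_mem_support_of_mem_edges hq)
    exact G.ne_of_adj (p.adj_of_mem_edges hp) (hx.trans hy.symm)

end SimpleGraph

section Crossing

variable {V C : Type*} {f : V → C → C → Prop}

lemma Crosses.exists_dart {G : SimpleGraph V} {a b : V} {x y : C} (h : Crosses f a b x y)
    (w : G.Walk a b) : ∃ d ∈ w.darts, Crosses f d.fst d.snd x y := by
  obtain ⟨d, hd, hfst, hsnd⟩ :=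
    w.exists_boundary_dart {v | f v x y ↔ f a x y} Iff.rfl fun hb => h hb.symm
  exact ⟨d, hd, fun h => hsnd (h.symm.trans hfst)⟩

lemma Crosses.ne (hf : ∀ v, IsStrictTotalOrder C (f v)) {u v : V} {x y : C}
    (h : Crosses f u v x y) : x ≠ y := by
  rintro rfl
  exact h (iff_of_false (irrefl_of (f u) x) (irrefl_of (f v) x))

lemma IsStrictTotalOrder.swap_iff {r : C → C → Prop} (hr : IsStrictTotalOrder C r) {x y : C}
    (hxy : x ≠ y) : r y x ↔ ¬ r x y :=
  ⟨fun hyx hxy => asymm hxy hyx,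
    fun h => ((trichotomous_of r x y).resolve_left h).resolve_left hxy⟩

lemma Crosses.swap (hf : ∀ v, IsStrictTotalOrder C (f v)) {u v : V} {x y : C}
    (h : Crosses f u v x y) : Crosses f u v y x := by
  rw [Crosses, (hf u).swap_iff (h.ne hf), (hf v).swap_iff (h.ne hf), not_iff_not]
  exact h

end Crossing

namespace SingleCrossingWrt

variable {V C : Type*} {G : SimpleGraph V} {f : V → C → C → Prop}

lemma iff_of_disjoint_edges (hsc : SingleCrossingWrt G f) {a z b : V} (w₁ : G.Walk a z)
    (w₂ : G.Walk z b) (hw : w₁.edges.Disjoint w₂.edges) {x y : C} (hab : f a x y ↔ f b x y) :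
    f z x y ↔ f a x y := by
  by_contra hza
  obtain ⟨d₁, hd₁, h₁⟩ := Crosses.exists_dart (fun h => hza h.symm) w₁
  obtain ⟨d₂, hd₂, h₂⟩ := Crosses.exists_dart (fun h => hza (h.trans hab.symm)) w₂
  have hd : d₁.edge = d₂.edge := hsc x y _ _ _ _ d₁.adj d₂.adj h₁ h₂
  exact hw (List.mem_map_of_mem hd₁) (hd ▸ List.mem_map_of_mem hd₂)

lemma exists_maj3_eq (hsc : SingleCrossingWrt G f) (hG : G.Connected) (u v w : V) :
    ∃ m, Maj3 (f u) (f v) (f w) = f m := by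
  classical
  obtain ⟨q, hq, -⟩ := hG.exists_path_of_dist u w
  obtain ⟨p⟩ := hG.preconnected v u
  obtain ⟨m, hm : m ∈ q.support, p', hp'⟩ :=
    p.exists_walk_meeting_set_at_end (S := {z | z ∈ q.support}) q.start_mem_support
  have huw : ∀ x y, (f u x y ↔ f w x y) → (f m x y ↔ f u x y) := fun _ _ =>
    hsc.iff_of_disjoint_edges _ _ (hq.isTrail.disjoint_edges_takeUntil_dropUntil hm)
  have hvu : ∀ x y, (f v x y ↔ f u x y) → (f m x y ↔ f v x y) := fun _ _ =>
    hsc.iff_of_disjoint_edges p' (q.takeUntil m hm).reverse <|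
      p'.disjoint_edges_of_forall_mem_support _ fun z hz hzq => hp' z hz <|
        q.support_takeUntil_subset_support hm (by simpa using hzq)
  have hvw : ∀ x y, (f v x y ↔ f w x y) → (f m x y ↔ f v x y) := fun _ _ =>
    hsc.iff_of_disjoint_edges p' (q.dropUntil m hm) <|
      p'.disjoint_edges_of_forall_mem_support _ fun z hz hzq => hp' z hz <|
        q.support_dropUntil_subset_support hm hzq
  refine ⟨m, funext₂ fun x y => propext ?_⟩
  have := huw x y
  have := hvu x y
  have := hvw x y
  unfold Maj3
  tauto

lemma edge_eq_of_crosses (hsc : SingleCrossingWrt G f) (hf : ∀ v, IsStrictTotalOrder C (f v))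
    {u v u' v' : V} (huv : G.Adj u v) (huv' : G.Adj u' v') {x y x' y' : C}
    (h : Crosses f u v x y) (h' : Crosses f u' v' x' y') (hxy : s(x, y) = s(x', y')) :
    s(u, v) = s(u', v') := by
  rcases Sym2.eq_iff.mp hxy with ⟨rfl, rfl⟩ | ⟨rfl, rfl⟩
  · exact hsc _ _ _ _ _ _ huv huv' h h'
  · exact hsc _ _ _ _ _ _ huv huv' h (h'.swap hf)

theorem ncard_range_le [Fintype C] (hsc : SingleCrossingWrt G f) (hG : G.Connected)
    (hf : ∀ v, IsStrictTotalOrder C (f v)) :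
    (Set.range f).ncard ≤ (Fintype.card C).choose 2 + 1 := by
  obtain ⟨r⟩ := hG.nonempty
  have hlabel : ∀ a ∈ Set.range f \ {f r}, ∃ e ∈ (Sym2.diagSet : Set (Sym2 C))ᶜ,
      ∃ u v, G.Adj u v ∧ G.dist r u < G.dist r v ∧ f v = a ∧
        ∃ x y, e = s(x, y) ∧ Crosses f u v x y := by
    rintro a ⟨ha, har⟩
    obtain ⟨u, v, huv, hdist, hua, hva⟩ := hG.exists_adj_dist_lt_ne_of_mem_range r ha har
    obtain ⟨x, y, hxy⟩ : ∃ x y, Crosses f u v x y := by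
      by_contra! h
      exact hua (hva ▸ funext₂ fun x y => propext (not_not.mp (h x y)))
    exact ⟨s(x, y), by simpa using hxy.ne hf, u, v, huv, hdist, hva, x, y, rfl, hxy⟩
  choose label hlabel_mem hlabel_spec using hlabel
  let g : (Set.range f \ {f r} : Set _) → ((Sym2.diagSet : Set (Sym2 C))ᶜ : Set _) :=
    fun a => ⟨label a a.2, hlabel_mem a a.2⟩
  have hg : Function.Injective g := by
    rintro ⟨a, ha⟩ ⟨a', ha'⟩ heq
    obtain ⟨u, v, huv, hdist, rfl, x, y, hxy, hcross⟩ := hlabel_spec a ha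
    obtain ⟨u', v', huv', hdist', rfl, x', y', hxy', hcross'⟩ := hlabel_spec a' ha'
    have he := hsc.edge_eq_of_crosses hf huv huv' hcross hcross'
      (hxy ▸ hxy' ▸ congrArg Subtype.val heq)
    rcases Sym2.eq_iff.mp he with ⟨-, rfl⟩ | ⟨rfl, rfl⟩
    · rfl
    · omega
  calc (Set.range f).ncard = (Set.range f \ {f r}).ncard + 1 :=
        (Set.ncard_sdiff_singleton_add_one (Set.mem_range_self r)).symm
    _ ≤ (Sym2.diagSet : Set (Sym2 C))ᶜ.ncard + 1 := by
        gcongr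
        rw [← Nat.card_coe_set_eq, ← Nat.card_coe_set_eq]
        exact Nat.card_le_card_of_injective g hg
    _ = (Fintype.card C).choose 2 + 1 := by
        rw [Sym2.ncard_diagSet_compl, Nat.card_eq_fintype_card]

end SingleCrossingWrt

section TriadMajority

variable {C : Type*} {P S : Set (C → C → Prop)}

lemma TriadGen.mem_of_subset (hPS : P ⊆ S)
    (hS : ∀ p ∈ S, ∀ q ∈ S, ∀ r ∈ S, Maj3 p q r ∈ S) {p : C → C → Prop} (hp : TriadGen P p) :
    p ∈ S := by
  induction hp with
  | base p hp => exact hPS hp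
  | maj p q r _ _ _ _ hp hq hr => exact hS p hp q hq r hr

lemma triadClosure_subset_setOf_triadGen (hPS : P ⊆ S)
    (hlin : ∀ p ∈ S, IsStrictTotalOrder C p) (hS : ∀ p ∈ S, ∀ q ∈ S, ∀ r ∈ S, Maj3 p q r ∈ S) :
    triadClosure P ⊆ {p | TriadGen P p} := by
  refine Set.sInter_subset_of_mem ⟨TriadGen.base, fun p hp => hlin p (hp.mem_of_subset hPS hS),
    fun p q r hp hq hr => ?_⟩
  have hpqr := hlin _ <| hS p (hp.mem_of_subset hPS hS) q (hq.mem_of_subset hPS hS) r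
    (hr.mem_of_subset hPS hS)
  exact ⟨hpqr, .maj p q r hp hq hr hpqr⟩

end TriadMajority

/-- if a set `Q` of linear orders is single crossing with respect to a tree
and `P ⊆ Q`, then every member of the triad majority closure of `P` is obtainable from `P`
by finitely many applications of the ternary majority operation; consequently the closure
is finite of size at most `C(m,2) + 1`. -/
theorem stmt_19 {C : Type} [Fintype C] (P Q : Set (C → C → Prop))
    (hQ : SCTreeSet Q) (hPQ : P ⊆ Q) :
    (∀ p ∈ triadClosure P, TriadGen P p) ∧
    (triadClosure P).Finite ∧
    (triadClosure P).ncard ≤ (Fintype.card C).choose 2 + 1 := by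
  obtain ⟨V, -, G, f, hG, hf, rfl, hsc⟩ := hQ
  have hmaj : ∀ p ∈ Set.range f, ∀ q ∈ Set.range f, ∀ r ∈ Set.range f,
      Maj3 p q r ∈ Set.range f := by
    rintro _ ⟨u, rfl⟩ _ ⟨v, rfl⟩ _ ⟨w, rfl⟩
    obtain ⟨m, hm⟩ := hsc.exists_maj3_eq hG.connected u v w
    exact ⟨m, hm.symm⟩
  have hlin : ∀ p ∈ Set.range f, IsStrictTotalOrder C p := by
    rintro _ ⟨v, rfl⟩
    exact hf v
  have hgen := triadClosure_subset_setOf_triadGen hPQ hlin hmaj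
  have hrange : triadClosure P ⊆ Set.range f := fun _ hp => (hgen hp).mem_of_subset hPQ hmaj
  refine ⟨hgen, Set.toFinite _, ?_⟩
  exact (Set.ncard_le_ncard hrange).trans (hsc.ncard_range_le hG.connected hf)
end
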